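/- For the dihedral group D of order 4b (b ≥ 1) as above, the determinant-weighted sum satisfies ∑_{g ∈ D} det(g) · x^{M_s(g)} y^{M(g)−M_s(g)} = (y − 1)(b·x + (b−1)·y − 1), where det(g) is the determinant of g in the 2-dimensional reflection representation. -/

import Mathlib

open Real in
/-- The reflection representation of the dihedral group of order `4b`, where the
generating reflections `s = sr 0` and `t = sr 1` have mirrors at angle `π/(2b)`:
the rotation `r k` acts by rotation through `k·π/b` and the reflection `sr k`
acts by reflection across the line at angle `k·π/(2b)`. -/
noncomputable def rho (b : ℕ) : DihedralGroup (2 * b) → Matrix (Fin 2) (Fin 2) ℝ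
  | DihedralGroup.r k => !![cos (k.val * π / b), -sin (k.val * π / b);
                            sin (k.val * π / b),  cos (k.val * π / b)]
  | DihedralGroup.sr k => !![cos (k.val * π / b),  sin (k.val * π / b);
                             sin (k.val * π / b), -cos (k.val * π / b)]

/-- The one-dimensional character `V_s` of the dihedral group of order `4b`
with `V_s(s) = V_s(sr 0) = -1` and `V_s(t) = V_s(sr 1) = 1`. -/
def chiS (b : ℕ) : DihedralGroup (2 * b) → ℤ
  | DihedralGroup.r k => (-1) ^ k.val
  | DihedralGroup.sr k => (-1) ^ (k.val + 1)

/-- `M_{V_s}(g) = dim im (V_s(g) − 1) ∈ {0,1}`: whether `V_s` is nontrivial on `g`. -/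
def MsD (b : ℕ) (g : DihedralGroup (2 * b)) : ℕ := if chiS b g = 1 then 0 else 1

/-- `M(g) = dim im (g − 1)` in the 2-dimensional reflection representation. -/
noncomputable def MD (b : ℕ) (g : DihedralGroup (2 * b)) : ℕ := (rho b g - 1).rank

/-!
Rotations have determinant `1` and reflections determinant `-1`. A nontrivial rotation fixes
no nonzero vector, so `M = 2` on it, while a reflection fixes a line, so `M = 1`; and `M_s`
records the parity of `k` on `r k` and the opposite parity on `sr k`. Summing, the rotations
contribute `1 + b·xy + (b - 1)·y²` and the reflections `-b·x - b·y`, which factors as claimed.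
-/

open Matrix Real DihedralGroup

namespace Matrix

variable {K : Type*} [Field K] {m n : Type*} [Fintype n]

theorem rank_pos_of_ne_zero {A : Matrix m n K} (h : A ≠ 0) : 0 < A.rank := by
  classical
  rw [Nat.pos_iff_ne_zero, rank, Ne, Submodule.finrank_eq_zero, LinearMap.range_eq_bot,
    ← toLin'_apply', LinearEquiv.map_eq_zero_iff]
  exact h

theorem rank_lt_card_of_det_eq_zero [DecidableEq n] {A : Matrix n n K} (h : A.det = 0) :
    A.rank < Fintype.card n := by
  obtain ⟨v, hv, hAv⟩ := exists_mulVec_eq_zero_iff.2 h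
  have hker : 0 < Module.finrank K (LinearMap.ker A.mulVecLin) :=
    Module.finrank_pos_iff_exists_ne_zero.2 ⟨⟨v, hAv⟩, Subtype.coe_ne_coe.1 hv⟩
  have := LinearMap.finrank_range_add_finrank_ker A.mulVecLin
  rw [Module.finrank_fintype_fun_eq_card] at this
  rw [rank]
  omega

theorem of_fin_two_sub_one {R : Type*} [Ring R] (a b c d : R) :
    !![a, b; c, d] - 1 = !![a - 1, b; c, d - 1] := by
  rw [one_fin_two, of_sub_of]
  simp

end Matrix

theorem ZMod.sum_val_eq_sum_range {M : Type*} [AddCommMonoid M] (n : ℕ) [NeZero n] (f : ℕ → M) :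
    ∑ k : ZMod n, f k.val = ∑ i ∈ Finset.range n, f i :=
  Finset.sum_nbij' (fun k => k.val) (fun i => (i : ZMod n))
    (by simp [ZMod.val_lt]) (by simp) (by simp) (by simp +contextual [Nat.mod_eq_of_lt])
    (by simp)

section ReflectionRepresentation

variable {b : ℕ}

theorem det_rho_r (k : ZMod (2 * b)) : (rho b (r k)).det = 1 := by
  simp only [rho, det_fin_two_of]
  linear_combination cos_sq_add_sin_sq (k.val * π / b)

theorem det_rho_sr (k : ZMod (2 * b)) : (rho b (sr k)).det = -1 := by
  simp only [rho, det_fin_two_of]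
  linear_combination -sin_sq_add_cos_sq (k.val * π / b)

theorem det_rho_r_sub_one (k : ZMod (2 * b)) :
    (rho b (r k) - 1).det = 2 * (1 - cos (k.val * π / b)) := by
  simp only [rho, of_fin_two_sub_one, det_fin_two_of]
  linear_combination sin_sq_add_cos_sq (k.val * π / b)

theorem det_rho_sr_sub_one (k : ZMod (2 * b)) : (rho b (sr k) - 1).det = 0 := by
  simp only [rho, of_fin_two_sub_one, det_fin_two_of]
  linear_combination -sin_sq_add_cos_sq (k.val * π / b)

theorem trace_rho_sr_sub_one (k : ZMod (2 * b)) : (rho b (sr k) - 1).trace = -2 := by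
  simp only [rho, of_fin_two_sub_one, trace_fin_two_of]
  ring

theorem rho_sr_sub_one_ne_zero (k : ZMod (2 * b)) : rho b (sr k) - 1 ≠ 0 := fun h => by
  have := trace_rho_sr_sub_one k
  rw [h, trace_zero] at this
  norm_num at this

theorem MD_one : MD b 1 = 0 := by
  show (rho b (r 0) - 1).rank = 0
  simp [rho, one_fin_two]

theorem MD_r (hb : b ≠ 0) {k : ZMod (2 * b)} (hk : k ≠ 0) : MD b (r k) = 2 := by
  have : NeZero (2 * b) := ⟨by omega⟩
  have hθ : 0 < k.val * π / b := by
    have := ZMod.val_pos.2 hk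
    positivity
  have hθ' : k.val * π / b < 2 * π := by
    have : (k.val : ℝ) < 2 * b := by exact_mod_cast ZMod.val_lt k
    rw [div_lt_iff₀ (by positivity)]
    nlinarith [pi_pos]
  have hcos : cos (k.val * π / b) ≠ 1 := fun h =>
    hθ.ne' ((cos_eq_one_iff_of_lt_of_lt (by linarith) hθ').1 h)
  have hdet : (rho b (r k) - 1).det ≠ 0 := by
    rw [det_rho_r_sub_one]
    exact mul_ne_zero two_ne_zero (sub_ne_zero.2 hcos.symm)
  rw [MD, rank_of_det_ne_zero hdet, Fintype.card_fin]

theorem MD_sr (k : ZMod (2 * b)) : MD b (sr k) = 1 := by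
  have hlt := rank_lt_card_of_det_eq_zero (det_rho_sr_sub_one k)
  have hpos := rank_pos_of_ne_zero (rho_sr_sub_one_ne_zero k)
  rw [Fintype.card_fin] at hlt
  rw [MD]
  omega

theorem MsD_r (k : ZMod (2 * b)) : MsD b (r k) = if Even k.val then 0 else 1 := by
  simp [MsD, chiS, neg_one_pow_eq_one_iff_even]

theorem MsD_sr (k : ZMod (2 * b)) : MsD b (sr k) = if Even k.val then 1 else 0 := by
  by_cases h : Even k.val <;> simp [MsD, chiS, h, Nat.even_add_one]

noncomputable def detWeight (b : ℕ) (x y : ℝ) (g : DihedralGroup (2 * b)) : ℝ :=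
  (rho b g).det * x ^ MsD b g * y ^ (MD b g - MsD b g)

theorem detWeight_r (hb : b ≠ 0) (x y : ℝ) (k : ZMod (2 * b)) :
    detWeight b x y (r k) = if k.val = 0 then 1 else if Even k.val then y ^ 2 else x * y := by
  rw [detWeight, det_rho_r, MsD_r]
  rcases eq_or_ne k 0 with rfl | hk
  · simp [MD_one]
  · rw [if_neg ((ZMod.val_ne_zero k).2 hk), MD_r hb hk]
    split_ifs <;> simp

theorem detWeight_sr (x y : ℝ) (k : ZMod (2 * b)) :
    detWeight b x y (sr k) = if Even k.val then -x else -y := by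
  rw [detWeight, det_rho_sr, MD_sr, MsD_sr]
  split_ifs <;> simp

end ReflectionRepresentation

theorem sum_range_two_mul_detWeight (x y : ℝ) {b : ℕ} (hb : b ≠ 0) :
    ∑ i ∈ Finset.range (2 * b),
        ((if i = 0 then 1 else if Even i then y ^ 2 else x * y) + if Even i then -x else -y)
      = (y - 1) * (b * x + ((b : ℝ) - 1) * y - 1) := by
  obtain ⟨n, rfl⟩ := Nat.exists_eq_succ_of_ne_zero hb
  induction n with
  | zero =>
    norm_num [Finset.sum_range_succ]
    ring
  | succ n ih =>
    rw [show 2 * (n + 2) = 2 * (n + 1) + 1 + 1 by ring, Finset.sum_range_succ,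
      Finset.sum_range_succ, ih n.succ_ne_zero]
    simp only [Nat.add_eq_zero_iff, one_ne_zero, and_false, if_false, Nat.even_add_one,
      even_two_mul, not_true, if_true]
    push_cast
    ring

theorem stmt2_general (b : ℕ) [NeZero (2 * b)] (x y : ℝ) :
    ∑ g : DihedralGroup (2 * b), (rho b g).det * x ^ MsD b g * y ^ (MD b g - MsD b g)
      = (y - 1) * (b * x + ((b : ℝ) - 1) * y - 1) := by
  have hb : b ≠ 0 := right_ne_zero_of_mul (NeZero.ne (2 * b))
  change ∑ g, detWeight b x y g = _
  rw [← equivSum.symm.sum_comp, Fintype.sum_sum_type]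
  simp only [equivSum_symm_apply, detWeight_r hb, detWeight_sr]
  rw [← Finset.sum_add_distrib]
  exact (ZMod.sum_val_eq_sum_range _ _).trans (sum_range_two_mul_detWeight x y hb)

/-- `∑_{g ∈ D} det(g)·x^{M_s(g)} y^{M(g)−M_s(g)} = (y − 1)(b·x + (b−1)·y − 1)` for the
dihedral group `D` of order `4b`. -/
theorem stmt2 (b : ℕ) (hb : 1 ≤ b) [NeZero (2 * b)] (x y : ℝ) :
    ∑ g : DihedralGroup (2 * b), (rho b g).det * x ^ MsD b g * y ^ (MD b g - MsD b g)
      = (y - 1) * (b * x + ((b : ℝ) - 1) * y - 1) :=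
  stmt2_general b x y
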